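/- Let λ > 0 and let ψ : S → ℝ be integrable. Set C₁ = ∫_{−∞}^0 e^{λy} ψ(y,1) dy and C₄ = ∫_0^∞ e^{−λy} ψ(y,−1) dy, and define φ : S → ℝ by: φ(x,1) = e^{−λx} ∫_{−∞}^x e^{λy} ψ(y,1) dy for x < 0; φ(x,1) = (p·C₁ + q'·C₄) e^{−λx} + ∫_0^x e^{−λ(x−y)} ψ(y,1) dy for x > 0; φ(x,−1) = e^{λx} ∫_x^∞ e^{−λy} ψ(y,−1) dy for x > 0; φ(x,−1) = (p'·C₁ + q·C₄) e^{λx} + ∫_x^0 e^{λ(x−y)} ψ(y,−1) dy for x < 0. Then φ is integrable on S and satisfies: φ(x,1) = C₁ + ∫_x^0 [λφ(y,1) − ψ(y,1)] dy for x < 0; φ(x,1) = (p·C₁ + q'·C₄) − ∫_0^x [λφ(y,1) − ψ(y,1)] dy for x > 0; φ(x,−1) = C₄ + ∫_0^x [λφ(y,−1) − ψ(y,−1)] dy for x > 0; φ(x,−1) = (p'·C₁ + q·C₄) − ∫_x^0 [λφ(y,−1) − ψ(y,−1)] dy for x < 0. In particular the one-sided limits of φ at 0 exist and satisfy φ(0+,1)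 = p·φ(0−,1) + q'·φ(0+,−1) and φ(0−,−1) = p'·φ(0−,1) + q·φ(0+,−1). -/

import Mathlib

/-!
On each half-line, each component of `φ` is a variation-of-constants solution of a first-order
linear ODE: `φ(·, 1)` solves `φ' = ψ - λ φ`, and `φ(·, -1)` solves `φ' = λ φ - ψ`, the same
equation with `λ, ψ` replaced by `-λ, -ψ`. These solutions are absolutely continuous, so the
integral identities are the fundamental theorem of calculus, and the one-sided limits at `0` are
the values of the solutions there. For integrability: the solution on the half-line where `ψ` is
integrated from infinity is, on all of `ℝ`, the convolution of `ψ` with the integrable kernel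
`1_{t ≥ 0} e^{-λ t}` (resp. `1_{t ≤ 0} e^{λ t}`), and the solution on the other half-line
differs from it by a multiple of an exponential that decays there.
-/

open MeasureTheory Real Filter Set
open scoped Topology

/-- The solution of `φ' = ψ - l φ` with `φ 0 = K`. -/
noncomputable def variationOfConstants (l K : ℝ) (ψ : ℝ → ℝ) (x : ℝ) : ℝ :=
  exp (-(l * x)) * (K + ∫ z in (0 : ℝ)..x, exp (l * z) * ψ z)

section

variable {l K : ℝ} {ψ φ : ℝ → ℝ}

@[simp]
theorem variationOfConstants_zero : variationOfConstants l K ψ 0 = K := by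
  simp [variationOfConstants]

theorem variationOfConstants_eq_add (K' : ℝ) (x : ℝ) :
    variationOfConstants l K ψ x = variationOfConstants l K' ψ x + (K - K') * exp (-(l * x)) := by
  simp only [variationOfConstants]; ring

theorem variationOfConstants_eq_duhamel (x : ℝ) :
    variationOfConstants l K ψ x =
      K * exp (-(l * x)) + ∫ y in (0 : ℝ)..x, exp (-(l * (x - y))) * ψ y := by
  rw [variationOfConstants, mul_add, ← intervalIntegral.integral_const_mul]
  congr 1
  · ring
  · refine intervalIntegral.integral_congr fun y _ => ?_
    rw [← mul_assoc, ← exp_add]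
    ring_nf

theorem variationOfConstants_neg_eq_duhamel (x : ℝ) :
    variationOfConstants (-l) K (-ψ) x =
      K * exp (l * x) + ∫ y in x..0, exp (l * (x - y)) * ψ y := by
  rw [variationOfConstants_eq_duhamel, intervalIntegral.integral_symm,
    ← intervalIntegral.integral_neg]
  simp [neg_mul]

theorem continuous_variationOfConstants (hψ : ∀ a b, IntervalIntegrable ψ volume a b) :
    Continuous (variationOfConstants l K ψ) :=
  (by fun_prop : Continuous fun x => exp (-(l * x))).mul <| continuous_const.add <|
    intervalIntegral.continuous_primitive (fun a b => (hψ a b).continuousOn_mul (by fun_prop)) 0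

theorem integral_mul_variationOfConstants_sub {x : ℝ} (hψ : IntervalIntegrable ψ volume 0 x) :
    ∫ y in (0 : ℝ)..x, (l * variationOfConstants l K ψ y - ψ y) =
      K - variationOfConstants l K ψ x := by
  set g : ℝ → ℝ := fun z => exp (l * z) * ψ z
  have hg : IntervalIntegrable g volume 0 x := hψ.continuousOn_mul (by fun_prop)
  have hE : AbsolutelyContinuousOnInterval (fun y => exp (-(l * y))) 0 x :=
    ContDiffOn.absolutelyContinuousOnInterval (by fun_prop)
  have hG : AbsolutelyContinuousOnInterval (fun y => K + ∫ z in (0 : ℝ)..y, g z) 0 x :=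
    (ContDiffOn.absolutelyContinuousOnInterval contDiffOn_const).fun_add
      (hg.absolutelyContinuousOnInterval_intervalIntegral left_mem_uIcc)
  have hFTC := hE.integral_deriv_mul_eq_sub hG
  simp only [intervalIntegral.integral_same, add_zero, mul_zero, neg_zero, exp_zero,
    one_mul] at hFTC
  rw [variationOfConstants, ← neg_sub, ← hFTC, ← intervalIntegral.integral_neg]
  refine intervalIntegral.integral_congr_ae ?_
  filter_upwards [hg.ae_hasDerivAt_integral] with y hGy hy
  have hEy : HasDerivAt (fun y => exp (-(l * y))) (-l * exp (-(l * y))) y := by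
    simpa [mul_comm] using ((hasDerivAt_id y).const_mul l).neg.exp
  rw [((hGy (uIoc_subset_uIcc hy) 0 left_mem_uIcc).const_add K).deriv, hEy.deriv]
  have : exp (-(l * y)) * exp (l * y) = 1 := by rw [← exp_add]; simp
  simp only [variationOfConstants, g]
  linear_combination ψ y * this

theorem integral_mul_sub_eq_of_eqOn_Ioi {x : ℝ} (hψ : IntervalIntegrable ψ volume 0 x)
    (hφ : EqOn φ (variationOfConstants l K ψ) (Ioi 0)) (hx : 0 < x) :
    ∫ y in (0 : ℝ)..x, (l * φ y - ψ y) = K - φ x := by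
  rw [hφ hx, ← integral_mul_variationOfConstants_sub hψ]
  refine intervalIntegral.integral_congr_ae (Eventually.of_forall fun y hy => ?_)
  rw [uIoc_of_le hx.le] at hy
  rw [hφ hy.1]

theorem integral_mul_sub_eq_of_eqOn_Iio {x : ℝ} (hψ : IntervalIntegrable ψ volume x 0)
    (hφ : EqOn φ (variationOfConstants l K ψ) (Iio 0)) (hx : x < 0) :
    ∫ y in x..0, (l * φ y - ψ y) = φ x - K := by
  rw [intervalIntegral.integral_symm, hφ hx, ← neg_sub,
    ← integral_mul_variationOfConstants_sub hψ.symm]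
  congr 1
  refine intervalIntegral.integral_congr_ae ?_
  filter_upwards [Measure.ae_ne volume 0] with y hy0 hy
  rw [uIoc_of_ge hx.le] at hy
  rw [hφ (lt_of_le_of_ne hy.2 hy0)]

theorem integral_neg_mul_sub_neg (l : ℝ) (φ ψ : ℝ → ℝ) (a b : ℝ) :
    ∫ y in a..b, (-l * φ y - (-ψ) y) = -∫ y in a..b, (l * φ y - ψ y) := by
  rw [← intervalIntegral.integral_neg]
  congr 1 with y
  simp only [Pi.neg_apply]
  ring

theorem tendsto_nhdsWithin_of_eqOn_variationOfConstants {s : Set ℝ}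
    (hψ : ∀ a b, IntervalIntegrable ψ volume a b)
    (hφ : EqOn φ (variationOfConstants l K ψ) s) : Tendsto φ (𝓝[s] 0) (𝓝 K) := by
  have := ((continuous_variationOfConstants (l := l) (K := K) hψ).tendsto 0).mono_left
    (nhdsWithin_le_nhds (s := s))
  rw [variationOfConstants_zero] at this
  exact tendsto_nhdsWithin_congr (fun x hx => (hφ hx).symm) this

theorem MeasureTheory.Integrable.integrableOn_exp_mul {f : ℝ → ℝ} {s : Set ℝ} {M : ℝ}
    (hψ : Integrable ψ) (hf : Measurable f) (hs : MeasurableSet s)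
    (hfM : ∀ z ∈ s, f z ≤ M) :
    IntegrableOn (fun z => exp (f z) * ψ z) s := by
  refine hψ.integrableOn.bdd_mul (c := exp M) (hf.exp.aestronglyMeasurable) ?_
  filter_upwards [ae_restrict_mem hs] with z hz
  rw [norm_of_nonneg (exp_pos _).le]
  exact exp_le_exp.2 (hfM z hz)

theorem variationOfConstants_setIntegral_Iic (hl : 0 ≤ l) (hψ : Integrable ψ) (x : ℝ) :
    variationOfConstants l (∫ z in Iic 0, exp (l * z) * ψ z) ψ x =
      exp (-(l * x)) * ∫ z in Iic x, exp (l * z) * ψ z := by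
  have hI (b : ℝ) : IntegrableOn (fun z => exp (l * z) * ψ z) (Iic b) :=
    hψ.integrableOn_exp_mul (by fun_prop) measurableSet_Iic
      fun z hz => mul_le_mul_of_nonneg_left hz hl
  rw [variationOfConstants, ← intervalIntegral.integral_Iic_sub_Iic (hI 0) (hI x)]
  ring

theorem variationOfConstants_neg_setIntegral_Ici (hl : 0 ≤ l) (hψ : Integrable ψ) (x : ℝ) :
    variationOfConstants (-l) (∫ z in Ici 0, exp (-(l * z)) * ψ z) (-ψ) x =
      exp (l * x) * ∫ z in Ici x, exp (-(l * z)) * ψ z := by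
  have hI (b : ℝ) : IntegrableOn (fun z => exp (-(l * z)) * ψ z) (Ici b) :=
    hψ.integrableOn_exp_mul (by fun_prop) measurableSet_Ici
      fun z hz => neg_le_neg (mul_le_mul_of_nonneg_left hz hl)
  simp only [variationOfConstants, neg_mul, neg_neg, Pi.neg_apply, mul_neg,
    intervalIntegral.integral_neg]
  rw [← intervalIntegral.integral_Ici_sub_Ici' (hI 0) (hI x)]
  ring

theorem integrable_exp_neg_mul_setIntegral_Iic (hl : 0 < l) (hψ : Integrable ψ) :
    Integrable fun x => exp (-(l * x)) * ∫ z in Iic x, exp (l * z) * ψ z := by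
  set k : ℝ → ℝ := (Ici 0).indicator fun t => exp (-(l * t))
  have hk : Integrable k := by
    refine ((integrableOn_Ici_iff_integrableOn_Ioi).2 ?_).integrable_indicator measurableSet_Ici
    simpa [neg_mul] using exp_neg_integrableOn_Ioi 0 hl
  refine (hψ.integrable_convolution (ContinuousLinearMap.mul ℝ ℝ) hk).congr
    (Eventually.of_forall fun x => ?_)
  simp only [convolution_def, ContinuousLinearMap.mul_apply']
  rw [← integral_const_mul, ← integral_indicator measurableSet_Iic]
  congr 1 with t
  by_cases ht : t ≤ x
  · simp [k, ht, ← mul_assoc, ← exp_add]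
    ring_nf
  · simp [k, ht]

theorem integrable_exp_mul_setIntegral_Ici (hl : 0 < l) (hψ : Integrable ψ) :
    Integrable fun x => exp (l * x) * ∫ z in Ici x, exp (-(l * z)) * ψ z := by
  set k : ℝ → ℝ := (Iic 0).indicator fun t => exp (l * t)
  have hk : Integrable k :=
    (integrableOn_exp_mul_Iic hl 0).integrable_indicator measurableSet_Iic
  refine (hψ.integrable_convolution (ContinuousLinearMap.mul ℝ ℝ) hk).congr
    (Eventually.of_forall fun x => ?_)
  simp only [convolution_def, ContinuousLinearMap.mul_apply']
  rw [← integral_const_mul, ← integral_indicator measurableSet_Ici]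
  congr 1 with t
  by_cases ht : x ≤ t
  · simp [k, ht, ← mul_assoc, ← exp_add]
    ring_nf
  · simp [k, ht]

theorem integrable_of_eqOn_Iio_Ioi {f g : ℝ → ℝ} (hf : IntegrableOn f (Iio 0))
    (hg : IntegrableOn g (Ioi 0)) (hφf : EqOn φ f (Iio 0)) (hφg : EqOn φ g (Ioi 0)) :
    Integrable φ := by
  have hφ : IntegrableOn φ (Iio 0 ∪ Ioi 0) :=
    (hf.congr_fun hφf.symm measurableSet_Iio).union (hg.congr_fun hφg.symm measurableSet_Ioi)
  rwa [Iio_union_Ioi, IntegrableOn, restrict_compl_singleton] at hφ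

theorem integrable_of_eqOn_variationOfConstants {C : ℝ} (hl : 0 < l) (hψ : Integrable ψ)
    (hC : C = ∫ z in Iic 0, exp (l * z) * ψ z)
    (hφn : EqOn φ (variationOfConstants l C ψ) (Iio 0))
    (hφp : EqOn φ (variationOfConstants l K ψ) (Ioi 0)) : Integrable φ := by
  have hP : Integrable (variationOfConstants l C ψ) :=
    (integrable_exp_neg_mul_setIntegral_Iic hl hψ).congr <| Eventually.of_forall fun x => by
      rw [hC, variationOfConstants_setIntegral_Iic hl.le hψ]
  have hexp : IntegrableOn (fun x => exp (-(l * x))) (Ioi 0) := by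
    simpa [neg_mul] using exp_neg_integrableOn_Ioi 0 hl
  refine integrable_of_eqOn_Iio_Ioi hP.integrableOn ?_ hφn hφp
  exact (hP.integrableOn.add (hexp.const_mul (K - C))).congr_fun
    (fun x _ => (variationOfConstants_eq_add C x).symm) measurableSet_Ioi

theorem integrable_of_eqOn_variationOfConstants_neg {C : ℝ} (hl : 0 < l) (hψ : Integrable ψ)
    (hC : C = ∫ z in Ici 0, exp (-(l * z)) * ψ z)
    (hφp : EqOn φ (variationOfConstants (-l) C (-ψ)) (Ioi 0))
    (hφn : EqOn φ (variationOfConstants (-l) K (-ψ)) (Iio 0)) : Integrable φ := by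
  have hP : Integrable (variationOfConstants (-l) C (-ψ)) :=
    (integrable_exp_mul_setIntegral_Ici hl hψ).congr <| Eventually.of_forall fun x => by
      rw [hC, variationOfConstants_neg_setIntegral_Ici hl.le hψ]
  have hexp : IntegrableOn (fun x => exp (-(-l * x))) (Iio 0) := by
    simpa using (integrableOn_exp_mul_Iic hl 0).mono_set Iio_subset_Iic_self
  refine integrable_of_eqOn_Iio_Ioi ?_ hP.integrableOn hφn hφp
  exact (hP.integrableOn.add (hexp.const_mul (K - C))).congr_fun
    (fun x _ => (variationOfConstants_eq_add C x).symm) measurableSet_Iio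

end

theorem stmt4 (p p' q q' : ℝ)
    (l : ℝ) (hl : 0 < l) (ψ1 ψm : ℝ → ℝ) (hψ1 : Integrable ψ1) (hψm : Integrable ψm)
    (C1 C4 : ℝ)
    (hC1 : C1 = ∫ y in Set.Iic (0:ℝ), Real.exp (l*y) * ψ1 y)
    (hC4 : C4 = ∫ y in Set.Ici (0:ℝ), Real.exp (-(l*y)) * ψm y)
    (φ1 φm : ℝ → ℝ)
    (hφ1n : ∀ x < (0:ℝ), φ1 x = Real.exp (-(l*x)) * ∫ y in Set.Iic x, Real.exp (l*y) * ψ1 y)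
    (hφ1p : ∀ x > (0:ℝ), φ1 x = (p*C1 + q'*C4) * Real.exp (-(l*x))
        + ∫ y in (0:ℝ)..x, Real.exp (-(l*(x-y))) * ψ1 y)
    (hφmp : ∀ x > (0:ℝ), φm x = Real.exp (l*x) * ∫ y in Set.Ici x, Real.exp (-(l*y)) * ψm y)
    (hφmn : ∀ x < (0:ℝ), φm x = (p'*C1 + q*C4) * Real.exp (l*x)
        + ∫ y in x..(0:ℝ), Real.exp (l*(x-y)) * ψm y) :
    Integrable φ1 ∧ Integrable φm ∧
    (∀ x < (0:ℝ), φ1 x = C1 + ∫ y in x..(0:ℝ), (l * φ1 y - ψ1 y)) ∧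
    (∀ x > (0:ℝ), φ1 x = (p*C1 + q'*C4) - ∫ y in (0:ℝ)..x, (l * φ1 y - ψ1 y)) ∧
    (∀ x > (0:ℝ), φm x = C4 + ∫ y in (0:ℝ)..x, (l * φm y - ψm y)) ∧
    (∀ x < (0:ℝ), φm x = (p'*C1 + q*C4) - ∫ y in x..(0:ℝ), (l * φm y - ψm y)) ∧
    (∃ a b c d : ℝ,
      Tendsto φ1 (nhdsWithin 0 (Set.Ioi 0)) (nhds a) ∧
      Tendsto φ1 (nhdsWithin 0 (Set.Iio 0)) (nhds b) ∧
      Tendsto φm (nhdsWithin 0 (Set.Ioi 0)) (nhds c) ∧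
      Tendsto φm (nhdsWithin 0 (Set.Iio 0)) (nhds d) ∧
      a = p * b + q' * c ∧ d = p' * b + q * c) := by
  set A := p*C1 + q'*C4
  set B := p'*C1 + q*C4
  have h1n : EqOn φ1 (variationOfConstants l C1 ψ1) (Iio 0) := fun x hx => by
    rw [hφ1n x hx, hC1, variationOfConstants_setIntegral_Iic hl.le hψ1]
  have h1p : EqOn φ1 (variationOfConstants l A ψ1) (Ioi 0) := fun x hx => by
    rw [hφ1p x hx, variationOfConstants_eq_duhamel]
  have hmp : EqOn φm (variationOfConstants (-l) C4 (-ψm)) (Ioi 0) := fun x hx => by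
    rw [hφmp x hx, hC4, variationOfConstants_neg_setIntegral_Ici hl.le hψm]
  have hmn : EqOn φm (variationOfConstants (-l) B (-ψm)) (Iio 0) := fun x hx => by
    rw [hφmn x hx, variationOfConstants_neg_eq_duhamel]
  have hψ1I (a b : ℝ) : IntervalIntegrable ψ1 volume a b := hψ1.intervalIntegrable
  have hψmI (a b : ℝ) : IntervalIntegrable (-ψm) volume a b := hψm.neg.intervalIntegrable
  refine ⟨integrable_of_eqOn_variationOfConstants hl hψ1 hC1 h1n h1p,
    integrable_of_eqOn_variationOfConstants_neg hl hψm hC4 hmp hmn,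
    fun x hx => ?_, fun x hx => ?_, fun x hx => ?_, fun x hx => ?_, A, C1, C4, B,
    tendsto_nhdsWithin_of_eqOn_variationOfConstants hψ1I h1p,
    tendsto_nhdsWithin_of_eqOn_variationOfConstants hψ1I h1n,
    tendsto_nhdsWithin_of_eqOn_variationOfConstants hψmI hmp,
    tendsto_nhdsWithin_of_eqOn_variationOfConstants hψmI hmn, rfl, rfl⟩
  · linarith [integral_mul_sub_eq_of_eqOn_Iio (hψ1I x 0) h1n hx]
  · linarith [integral_mul_sub_eq_of_eqOn_Ioi (hψ1I 0 x) h1p hx]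
  · linarith [integral_neg_mul_sub_neg l φm ψm 0 x,
      integral_mul_sub_eq_of_eqOn_Ioi (hψmI 0 x) hmp hx]
  · linarith [integral_neg_mul_sub_neg l φm ψm x 0,
      integral_mul_sub_eq_of_eqOn_Iio (hψmI x 0) hmn hx]
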